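/- Let E be a real inner product space and Q ⊆ E convex. Let g : E → ℝ be convex and differentiable with L-Lipschitz gradient on Q, let h : E → ℝ be convex, and set f = g + h. Suppose g̃ : E → E satisfies ‖g̃(x) − ∇g(x)‖ ≤ Δ for all x ∈ Q, and that g(y) ≥ g(x) + ⟨g̃(x), y − x⟩ − γ‖y − x‖ − δ for all x, y ∈ Q, where Δ, γ, δ ≥ 0. Define ψ(y, x) = ⟨g̃(x), y − x⟩ + h(y) − h(x). Then for all x, y ∈ Q: f(x) + ψ(y, x) − γ‖y − x‖ − δ ≤ f(y) ≤ f(x) + ψ(y, x) + Δ‖y − x‖ + (L/2)‖y − x‖². In particular, ψ is a (δ, γ, Δ, L)-model of the composite function f with Bregman divergence V(y, x) = (1/2)‖y − x‖². -/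

import Mathlib

/-!
The lower bound is the hypothesis on `gA` with `h x + (h y - h x)` added on both sides. For the
upper bound, the Lipschitz gradient gives the descent lemma
`g y ≤ g x + ⟪∇g x, y - x⟫ + L/2 ‖y - x‖²` (along the segment from `x` to `y` the slope of `g`
grows at most linearly, and integrating gives the factor `1/2`); replacing `∇g x` by `gA x` costs
at most `Δ ‖y - x‖` by Cauchy–Schwarz.
-/

open Set
open scoped RealInnerProductSpace

lemma image_one_le_of_deriv_le_add_mul {φ φ' : ℝ → ℝ} {a c : ℝ}
    (hφ : ∀ t ∈ Icc (0 : ℝ) 1, HasDerivAt φ (φ' t) t)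
    (hφ' : ∀ t ∈ Icc (0 : ℝ) 1, φ' t ≤ a + c * t) :
    φ 1 ≤ φ 0 + a + c / 2 := by
  let B : ℝ → ℝ := fun t => φ 0 + t * a + c / 2 * t ^ 2
  have hB : ∀ t, HasDerivAt B (a + c * t) t := fun t => by
    have := (((hasDerivAt_id' t).mul_const a).const_add (φ 0)).add
      ((hasDerivAt_pow 2 t).const_mul (c / 2))
    exact this.congr_deriv (by ring)
  have key := image_le_of_deriv_right_le_deriv_boundary (a := 0) (b := 1) (B := B)
    (fun t ht => (hφ t ht).continuousAt.continuousWithinAt)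
    (fun t ht => (hφ t (Ico_subset_Icc_self ht)).hasDerivWithinAt)
    (by simp [B])
    (fun t _ => (hB t).continuousAt.continuousWithinAt)
    (fun t _ => (hB t).hasDerivWithinAt)
    (fun t ht => hφ' t (Ico_subset_Icc_self ht))
    (right_mem_Icc.2 zero_le_one)
  simpa [B] using key

section InnerProductSpace

variable {E : Type*} [NormedAddCommGroup E] [InnerProductSpace ℝ E] [CompleteSpace E]

lemma HasGradientAt.hasDerivAt_add_smul {g : E → ℝ} {g' x v : E} {t : ℝ}
    (hg : HasGradientAt g g' (x + t • v)) :
    HasDerivAt (fun s : ℝ => g (x + s • v)) ⟪g', v⟫ t := by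
  have hline : HasDerivAt (fun s : ℝ => x + s • v) v t := by
    simpa using ((hasDerivAt_id t).smul_const v).const_add x
  have := hg.hasFDerivAt.comp_hasDerivAt t hline
  simp only [InnerProductSpace.toDual_apply_apply] at this
  exact this

theorem Convex.le_add_inner_add_sq_of_lipschitz_gradient {Q : Set E} (hQ : Convex ℝ Q)
    {g : E → ℝ} {g' : E → E} {L : ℝ} (hg : ∀ z ∈ Q, HasGradientAt g (g' z) z)
    (hLip : ∀ x ∈ Q, ∀ y ∈ Q, ‖g' x - g' y‖ ≤ L * ‖x - y‖) {x y : E} (hx : x ∈ Q) (hy : y ∈ Q) :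
    g y ≤ g x + ⟪g' x, y - x⟫ + L / 2 * ‖y - x‖ ^ 2 := by
  set v := y - x
  have hseg : ∀ t ∈ Icc (0 : ℝ) 1, x + t • v ∈ Q := fun t ht => hQ.add_smul_sub_mem hx hy ht
  have hslope : ∀ t ∈ Icc (0 : ℝ) 1,
      ⟪g' (x + t • v), v⟫ ≤ ⟪g' x, v⟫ + L * ‖v‖ ^ 2 * t := by
    intro t ht
    have hdist : ‖x + t • v - x‖ = t * ‖v‖ := by simp [norm_smul, abs_of_nonneg ht.1]
    have hinc : ⟪g' (x + t • v) - g' x, v⟫ ≤ L * ‖v‖ ^ 2 * t :=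
      calc ⟪g' (x + t • v) - g' x, v⟫ ≤ ‖g' (x + t • v) - g' x‖ * ‖v‖ := real_inner_le_norm _ _
        _ ≤ L * (t * ‖v‖) * ‖v‖ := by
          rw [← hdist]; gcongr; exact hLip _ (hseg t ht) _ hx
        _ = L * ‖v‖ ^ 2 * t := by ring
    rw [inner_sub_left] at hinc
    linarith
  have hends := image_one_le_of_deriv_le_add_mul
    (fun t ht => (hg _ (hseg t ht)).hasDerivAt_add_smul) hslope
  simp only [zero_smul, add_zero, one_smul, v, add_sub_cancel] at hends
  linarith

end InnerProductSpace

theorem composite_model_general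
    {E : Type*} [NormedAddCommGroup E] [InnerProductSpace ℝ E] [CompleteSpace E]
    (Q : Set E) (hQ : Convex ℝ Q)
    (g : E → ℝ) (g' : E → E)
    (hgdiff : ∀ x, HasGradientAt g (g' x) x)
    (h : E → ℝ)
    (L Δ γ δ : ℝ)
    (hLip : ∀ x ∈ Q, ∀ y ∈ Q, ‖g' x - g' y‖ ≤ L * ‖x - y‖)
    (gA : E → E) (hgA : ∀ x ∈ Q, ‖gA x - g' x‖ ≤ Δ)
    (hlower : ∀ x ∈ Q, ∀ y ∈ Q, g y ≥ g x + ⟪gA x, y - x⟫ - γ * ‖y - x‖ - δ)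
    (f : E → ℝ) (hf : ∀ x, f x = g x + h x)
    (ψ : E → E → ℝ) (hψ : ∀ x y, ψ y x = ⟪gA x, y - x⟫ + h y - h x) :
    ∀ x ∈ Q, ∀ y ∈ Q,
      f x + ψ y x - γ * ‖y - x‖ - δ ≤ f y ∧
      f y ≤ f x + ψ y x + Δ * ‖y - x‖ + L / 2 * ‖y - x‖ ^ 2 := by
  intro x hx y hy
  rw [hf x, hf y, hψ x y]
  have hdescent := hQ.le_add_inner_add_sq_of_lipschitz_gradient (fun z _ => hgdiff z) hLip hx hy
  have hinexact : ⟪g' x, y - x⟫ ≤ ⟪gA x, y - x⟫ + Δ * ‖y - x‖ :=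
    calc ⟪g' x, y - x⟫ = ⟪gA x, y - x⟫ + ⟪g' x - gA x, y - x⟫ := by rw [inner_sub_left]; ring
      _ ≤ ⟪gA x, y - x⟫ + ‖g' x - gA x‖ * ‖y - x‖ := by gcongr; exact real_inner_le_norm _ _
      _ ≤ ⟪gA x, y - x⟫ + Δ * ‖y - x‖ := by
        gcongr; rw [norm_sub_rev]; exact hgA x hx
  constructor <;> linarith [hlower x hx y hy]

/-- For a composite function `f = g + h` with `g` smooth (inexact gradient `gA`,
accuracy `Δ`, lower bound with parameters `γ, δ`) and `h` convex, the function
`ψ(y, x) = ⟪gA x, y − x⟫ + h y − h x` is a `(δ, γ, Δ, L)`-model of `f`. -/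
theorem composite_model
    {E : Type*} [NormedAddCommGroup E] [InnerProductSpace ℝ E] [CompleteSpace E]
    (Q : Set E) (hQ : Convex ℝ Q)
    (g : E → ℝ) (g' : E → E)
    (hgdiff : ∀ x, HasGradientAt g (g' x) x)
    (hgconv : ConvexOn ℝ Q g)
    (h : E → ℝ) (hhconv : ConvexOn ℝ Q h)
    (L Δ γ δ : ℝ) (hL : 0 ≤ L) (hΔ : 0 ≤ Δ) (hγ : 0 ≤ γ) (hδ : 0 ≤ δ)
    (hLip : ∀ x ∈ Q, ∀ y ∈ Q, ‖g' x - g' y‖ ≤ L * ‖x - y‖)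
    (gA : E → E) (hgA : ∀ x ∈ Q, ‖gA x - g' x‖ ≤ Δ)
    (hlower : ∀ x ∈ Q, ∀ y ∈ Q, g y ≥ g x + ⟪gA x, y - x⟫ - γ * ‖y - x‖ - δ)
    (f : E → ℝ) (hf : ∀ x, f x = g x + h x)
    (ψ : E → E → ℝ) (hψ : ∀ x y, ψ y x = ⟪gA x, y - x⟫ + h y - h x) :
    ∀ x ∈ Q, ∀ y ∈ Q,
      f x + ψ y x - γ * ‖y - x‖ - δ ≤ f y ∧
      f y ≤ f x + ψ y x + Δ * ‖y - x‖ + L / 2 * ‖y - x‖ ^ 2 :=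
  composite_model_general Q hQ g g' hgdiff h L Δ γ δ hLip gA hgA hlower f hf ψ hψ
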